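/- Let λ_1 be a special symplectic partition of the even number d_1 and λ_2 a special orthogonal partition of the even number d_2, set d = d_1+d_2, and assume every nonzero entry of λ_1^t and of λ_2^t is even. Let k be the largest index with λ_{1,k}+λ_{2,k} > 0, set a_i = λ_{i,1}, let l_i be the largest j ≥ 1 with λ_{i,j} = λ_{i,1}, and l = min(l_1,l_2); assume l is even. Let λ_i' = (λ_{i,l+1},…,λ_{i,k}) and set δ = 1 if a_1 is even and a_2 is odd, and δ = 0 otherwise. Let ξ be the sequence formed from (λ_1,λ_2) with data (ε_1,ε_2,d) = (0,1,d) and ξ' the sequence formed from (λ_1',λ_2') with data (0,1,d') for any d' ≡ d (mod 2). Then ξ_1 = δ, ξ_l = −δ, ξ_j = 0 for 1 < j < l, and ξ'_j = ξ_{j+l} for every j ≥ 1. -/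

import Mathlib

/-- `f` is a partition of `d`: weakly decreasing, finitely many nonzero terms, total sum `d`.
    Indexing is 0-based: `f j` is the `(j+1)`-st part. -/
def IsPartitionOf (f : ℕ → ℕ) (d : ℕ) : Prop :=
  Antitone f ∧ ∃ N, (∀ j, N ≤ j → f j = 0) ∧ ∑ j ∈ Finset.range N, f j = d

/-- Transpose of a partition (0-based): `ptrans f k` = #{j : f j ≥ k+1}, i.e. `(f^t)_{k+1}`. -/
noncomputable def ptrans (f : ℕ → ℕ) : ℕ → ℕ := fun k => Nat.card {j : ℕ // k + 1 ≤ f j}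

/-- Multiplicity of the part `k` in `f` (meaningful for `k > 0`). -/
noncomputable def pmult (f : ℕ → ℕ) (k : ℕ) : ℕ := Nat.card {j : ℕ // f j = k}

/-- Orthogonal: every even positive part occurs with even multiplicity. -/
def IsOrthogonal (f : ℕ → ℕ) : Prop := ∀ k, 0 < k → Even k → Even (pmult f k)

/-- Symplectic: every odd positive part occurs with even multiplicity. -/
def IsSymplectic (f : ℕ → ℕ) : Prop := ∀ k, 0 < k → Odd k → Even (pmult f k)

/-- Dominance order for ℕ-valued sequences. -/
def NDomLE (f g : ℕ → ℕ) : Prop :=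
  ∀ N, ∑ j ∈ Finset.range N, f j ≤ ∑ j ∈ Finset.range N, g j

/-- Dominance order for ℤ-valued sequences. -/
def DomLE (f g : ℕ → ℤ) : Prop :=
  ∀ N, ∑ j ∈ Finset.range N, f j ≤ ∑ j ∈ Finset.range N, g j

/-- `ν` is the `P`-collapse of `μ` (both of total size `m`): `ν` is a partition of `m`
    satisfying `P`, `ν ≤ μ`, and every partition `σ` of `m` satisfying `P` with `σ ≤ μ`
    satisfies `σ ≤ ν`. -/
def IsCollapse (P : (ℕ → ℕ) → Prop) (m : ℕ) (μ ν : ℕ → ℕ) : Prop :=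
  IsPartitionOf ν m ∧ P ν ∧ NDomLE ν μ ∧
    ∀ σ, IsPartitionOf σ m → P σ → NDomLE σ μ → NDomLE σ ν

/-- B-collapse (largest orthogonal partition below `μ`, `m` odd). -/
def IsBCollapse : ℕ → (ℕ → ℕ) → (ℕ → ℕ) → Prop := IsCollapse IsOrthogonal
/-- C-collapse (largest symplectic partition below `μ`, `m` even). -/
def IsCCollapse : ℕ → (ℕ → ℕ) → (ℕ → ℕ) → Prop := IsCollapse IsSymplectic
/-- D-collapse (largest orthogonal partition below `μ`, `m` even). -/
def IsDCollapse : ℕ → (ℕ → ℕ) → (ℕ → ℕ) → Prop := IsCollapse IsOrthogonal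

/-- `μ^−` : decrease the smallest nonzero part by 1. -/
def minusOne (f : ℕ → ℕ) : ℕ → ℕ :=
  fun j => if 0 < f j ∧ f (j+1) = 0 then f j - 1 else f j

/-- `μ^+` : increase the largest part by 1. -/
def plusOne (f : ℕ → ℕ) : ℕ → ℕ := fun j => if j = 0 then f 0 + 1 else f j

/-- `u = f ∪ g` : `u` is weakly decreasing, finitely supported, and every positive
    part occurs in `u` with multiplicity the sum of its multiplicities in `f` and `g`. -/
def IsUnionOf (u f g : ℕ → ℕ) : Prop :=
  Antitone u ∧ (∃ N, ∀ j, N ≤ j → u j = 0) ∧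
    ∀ k, 0 < k → pmult u k = pmult f k + pmult g k

/-- The sequence ξ attached to `(f, g, ε₁, ε₂, d)`.  Index `j` here corresponds to the
    1-based index `j+1` of the paper. -/
def xiSeq (f g : ℕ → ℕ) (e1 e2 d : ℕ) : ℕ → ℤ := fun j =>
  if (j + 1) % 2 = (d + 1) % 2 ∧ f j % 2 = e1 ∧ g j % 2 = e2 ∧
      (j = 0 ∨ f j + g j < f (j - 1) + g (j - 1)) then 1
  else if (j + 1) % 2 = d % 2 ∧ f j % 2 = e1 ∧ g j % 2 = e2 ∧
      f (j + 1) + g (j + 1) < f j + g j then -1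
  else 0

/-- The Waldspurger sequence `W(f,g) = f + g + ξ` (ℤ-valued a priori). -/
def wald (f g : ℕ → ℕ) (e1 e2 d : ℕ) : ℕ → ℤ :=
  fun j => (f j : ℤ) + (g j : ℤ) + xiSeq f g e1 e2 d j

/-- Drop the first `l` entries of `f` (shift left by `l`). -/
def shiftBy (f : ℕ → ℕ) (l : ℕ) : ℕ → ℕ := fun j => f (j + l)

/-! On the first `l = min l₁ l₂` rows both partitions are constant, so `λ₁ + λ₂` first drops
between rows `l` and `l + 1`. For `d` even, the parity conditions in `ξ` can then only fire at
row `1` (value `+1`) and at row `l` (value `−1`), both exactly when `a₁` is even and `a₂` odd.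
Since `l` is even, shifting by `l` preserves the parity of `j - d`, and the drop at row `l`
makes row `l + 1` behave like a first row, so `ξ'` is `ξ` shifted by `l`. -/

section XiSeq

variable {f g : ℕ → ℕ} {e1 e2 d : ℕ}

theorem xiSeq_zero_of_even (hd : Even d) :
    xiSeq f g e1 e2 d 0 = if f 0 % 2 = e1 ∧ g 0 % 2 = e2 then 1 else 0 := by
  have : d % 2 = 0 := Nat.even_iff.mp hd
  simp only [xiSeq, true_or, and_true]
  split_ifs <;> omega

theorem xiSeq_of_descent {j : ℕ} (hj : (j + 1) % 2 = d % 2)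
    (hdesc : f (j + 1) + g (j + 1) < f j + g j) :
    xiSeq f g e1 e2 d j = -if f j % 2 = e1 ∧ g j % 2 = e2 then 1 else 0 := by
  simp only [xiSeq]
  split_ifs <;> omega

theorem xiSeq_eq_zero_of_flat {j : ℕ} (hj : 0 < j) (hprev : f j + g j = f (j - 1) + g (j - 1))
    (hnext : f (j + 1) + g (j + 1) = f j + g j) : xiSeq f g e1 e2 d j = 0 := by
  simp only [xiSeq]
  split_ifs <;> omega

theorem xiSeq_shiftBy {l d' : ℕ} (hpar : (d' + l) % 2 = d % 2)
    (hdesc : f l + g l < f (l - 1) + g (l - 1)) (j : ℕ) :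
    xiSeq (shiftBy f l) (shiftBy g l) e1 e2 d' j = xiSeq f g e1 e2 d (j + l) := by
  have hl : l ≠ 0 := by rintro rfl; exact lt_irrefl _ hdesc
  have hstart : (j = 0 ∨ f (j + l) + g (j + l) < f (j - 1 + l) + g (j - 1 + l)) ↔
      (j + l = 0 ∨ f (j + l) + g (j + l) < f (j + l - 1) + g (j + l - 1)) := by
    rcases Nat.eq_zero_or_pos j with rfl | hj
    · simpa [hl] using hdesc
    · simp only [show j - 1 + l = j + l - 1 by omega]; omega
  simp only [xiSeq, shiftBy, hstart, show j + 1 + l = j + l + 1 by omega,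
    show (j + 1) % 2 = (d' + 1) % 2 ↔ (j + l + 1) % 2 = (d + 1) % 2 by omega,
    show (j + 1) % 2 = d' % 2 ↔ (j + l + 1) % 2 = d % 2 by omega]

end XiSeq

theorem Antitone.apply_eq_apply_zero_of_lt {f : ℕ → ℕ} (hf : Antitone f) {l j : ℕ}
    (hl : f (l - 1) = f 0) (hj : j < l) : f j = f 0 :=
  le_antisymm (hf (Nat.zero_le j)) (hl ▸ hf (by omega))

theorem add_apply_min_lt_of_antitone {f g : ℕ → ℕ} (hf : Antitone f) (hg : Antitone g) {l1 l2 : ℕ}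
    (hl1a : 1 ≤ l1) (hl1b : f (l1 - 1) = f 0) (hl1c : f l1 ≠ f 0)
    (hl2a : 1 ≤ l2) (hl2b : g (l2 - 1) = g 0) (hl2c : g l2 ≠ g 0) :
    f (min l1 l2) + g (min l1 l2) < f (min l1 l2 - 1) + g (min l1 l2 - 1) := by
  have hf1 : f (min l1 l2 - 1) = f 0 := hf.apply_eq_apply_zero_of_lt hl1b (by omega)
  have hg1 : g (min l1 l2 - 1) = g 0 := hg.apply_eq_apply_zero_of_lt hl2b (by omega)
  have hfl : f (min l1 l2) ≤ f 0 := hf (Nat.zero_le _)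
  have hgl : g (min l1 l2) ≤ g 0 := hg (Nat.zero_le _)
  rcases min_choice l1 l2 with h | h <;> rw [h] at hf1 hg1 hfl hgl ⊢ <;> omega

theorem stmt17_general (d1 d2 l1 l2 : ℕ) (hd1 : Even d1) (hd2 : Even d2)
    (lam1 lam2 : ℕ → ℕ)
    (h1 : IsPartitionOf lam1 d1)
    (h2 : IsPartitionOf lam2 d2)
    (hl1a : 1 ≤ l1) (hl1b : lam1 (l1 - 1) = lam1 0) (hl1c : lam1 l1 ≠ lam1 0)
    (hl2a : 1 ≤ l2) (hl2b : lam2 (l2 - 1) = lam2 0) (hl2c : lam2 l2 ≠ lam2 0)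
    (hleven : Even (min l1 l2)) :
    xiSeq lam1 lam2 0 1 (d1 + d2) 0
        = (if Even (lam1 0) ∧ Odd (lam2 0) then 1 else 0) ∧
    xiSeq lam1 lam2 0 1 (d1 + d2) (min l1 l2 - 1)
        = -(if Even (lam1 0) ∧ Odd (lam2 0) then 1 else 0) ∧
    (∀ j, 0 < j → j + 1 < min l1 l2 → xiSeq lam1 lam2 0 1 (d1 + d2) j = 0) ∧
    ∀ d' : ℕ, d' % 2 = (d1 + d2) % 2 →
      ∀ j, xiSeq (shiftBy lam1 (min l1 l2)) (shiftBy lam2 (min l1 l2)) 0 1 d' j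
          = xiSeq lam1 lam2 0 1 (d1 + d2) (j + min l1 l2) := by
  obtain ⟨hf, -⟩ := h1
  obtain ⟨hg, -⟩ := h2
  have hd : Even (d1 + d2) := hd1.add hd2
  have hdpar : (d1 + d2) % 2 = 0 := Nat.even_iff.mp hd
  have hlpar : min l1 l2 % 2 = 0 := Nat.even_iff.mp hleven
  have hdesc := add_apply_min_lt_of_antitone hf hg hl1a hl1b hl1c hl2a hl2b hl2c
  have hflat : ∀ j < min l1 l2, lam1 j + lam2 j = lam1 0 + lam2 0 := fun j hj => by
    rw [hf.apply_eq_apply_zero_of_lt hl1b (lt_min_iff.mp hj).1,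
      hg.apply_eq_apply_zero_of_lt hl2b (lt_min_iff.mp hj).2]
  have hparity : (if lam1 0 % 2 = 0 ∧ lam2 0 % 2 = 1 then (1 : ℤ) else 0)
      = if Even (lam1 0) ∧ Odd (lam2 0) then 1 else 0 := by
    simp only [Nat.even_iff, Nat.odd_iff]
  refine ⟨?_, ?_, ?_, ?_⟩
  · rw [xiSeq_zero_of_even hd, hparity]
  · have hlast : min l1 l2 - 1 + 1 = min l1 l2 := by omega
    rw [xiSeq_of_descent (by omega) (by rwa [hlast]),
      hf.apply_eq_apply_zero_of_lt hl1b (by omega), hg.apply_eq_apply_zero_of_lt hl2b (by omega),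
      hparity]
  · intro j hj0 hjl
    exact xiSeq_eq_zero_of_flat hj0 ((hflat j (by omega)).trans (hflat (j - 1) (by omega)).symm)
      ((hflat (j + 1) hjl).trans (hflat j (by omega)).symm)
  · intro d' hd' j
    exact xiSeq_shiftBy (by omega) hdesc j

/-- type C stripping of the top rectangle.
`λ₁` special symplectic of even `d₁`, `λ₂` special orthogonal of even `d₂`, transposes
with all nonzero entries even; `k` the largest (1-based) index with
`λ_{1,k}+λ_{2,k} > 0`; `aᵢ = λ_{i,1}`; `lᵢ` the largest `j ≥ 1` with
`λ_{i,j} = λ_{i,1}`; `l = min(l₁,l₂)` even; `λᵢ' = (λ_{i,l+1},…,λ_{i,k})`;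
`δ = 1` iff `a₁` even and `a₂` odd.  With `ξ` formed from `(λ₁,λ₂)` with data
`(0,1,d)`, `d = d₁+d₂`, and `ξ'` formed from `(λ₁',λ₂')` with data `(0,1,d')`,
`d' ≡ d (mod 2)`: `ξ₁ = δ`, `ξ_l = −δ`, `ξ_j = 0` for `1 < j < l`, and
`ξ'_j = ξ_{j+l}` for all `j ≥ 1`.  (0-based: positions `0` and `l−1`.) -/
theorem stmt17 (d1 d2 k l1 l2 : ℕ) (hd1 : Even d1) (hd2 : Even d2)
    (lam1 lam2 : ℕ → ℕ)
    (h1 : IsPartitionOf lam1 d1) (h1sp : IsSymplectic lam1)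
    (h1s : IsSymplectic (ptrans lam1))
    (h2 : IsPartitionOf lam2 d2) (h2o : IsOrthogonal lam2)
    (h2s : IsSymplectic (ptrans lam2))
    (ht1 : ∀ j, ptrans lam1 j ≠ 0 → Even (ptrans lam1 j))
    (ht2 : ∀ j, ptrans lam2 j ≠ 0 → Even (ptrans lam2 j))
    (hk1 : 1 ≤ k) (hkpos : 0 < lam1 (k-1) + lam2 (k-1))
    (hkmax : lam1 k + lam2 k = 0)
    (hl1a : 1 ≤ l1) (hl1b : lam1 (l1 - 1) = lam1 0) (hl1c : lam1 l1 ≠ lam1 0)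
    (hl2a : 1 ≤ l2) (hl2b : lam2 (l2 - 1) = lam2 0) (hl2c : lam2 l2 ≠ lam2 0)
    (hleven : Even (min l1 l2)) :
    xiSeq lam1 lam2 0 1 (d1 + d2) 0
        = (if Even (lam1 0) ∧ Odd (lam2 0) then 1 else 0) ∧
    xiSeq lam1 lam2 0 1 (d1 + d2) (min l1 l2 - 1)
        = -(if Even (lam1 0) ∧ Odd (lam2 0) then 1 else 0) ∧
    (∀ j, 0 < j → j + 1 < min l1 l2 → xiSeq lam1 lam2 0 1 (d1 + d2) j = 0) ∧
    ∀ d' : ℕ, d' % 2 = (d1 + d2) % 2 →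
      ∀ j, xiSeq (shiftBy lam1 (min l1 l2)) (shiftBy lam2 (min l1 l2)) 0 1 d' j
          = xiSeq lam1 lam2 0 1 (d1 + d2) (j + min l1 l2) :=
  stmt17_general d1 d2 l1 l2 hd1 hd2 lam1 lam2 h1 h2 hl1a hl1b hl1c hl2a hl2b hl2c hleven
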